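/- Let (u_I)_{I⊆[r]} be a family of nonzero elements of R(α) with u_∅ = 1, all regular and with regular inverse at α = 0. If for every subset H ⊆ [r] with |H| ≥ 2 the quantity T_H(u) := ∏_{G⊆H} u_G^{(-1)^{|H|-|G|}} − 1 is O(α^{|H|-1}), then for every such H the cumulant κ_H(u) := ∑_{π∈P(H)} μ(π,{H}) ∏_{B∈π} u_B satisfies κ_H(u) = (∏_{h∈H} u_{h}) · O(α^{|H|-1}). -/

import Mathlib

open scoped BigOperators

/-- A rational function in `α` has no pole at `α = 0`. -/
def NoPoleAtZero {F : Type*} [Field F] (f : RatFunc F) : Prop :=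
  Polynomial.eval 0 f.denom ≠ 0

/-- `f = O(α^k)`. -/
def IsBigO {F : Type*} [Field F] (k : ℕ) (f : RatFunc F) : Prop :=
  ∃ g : RatFunc F, NoPoleAtZero g ∧ f = RatFunc.X ^ k * g

/-- `T_H(u) = ∏_{G⊆H} u_G^{(-1)^{|H|-|G|}} − 1`. -/
noncomputable def Terr {F ι : Type*} [Field F] [DecidableEq ι]
    (u : Finset ι → RatFunc F) (H : Finset ι) : RatFunc F :=
  (∏ G ∈ H.powerset, u G ^ ((-1 : ℤ) ^ (H.card - G.card))) - 1

/-- `κ_H(u) = ∑_{π ∈ P(H)} μ(π,{H}) ∏_{B∈π} u_B` with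
`μ(π,{H}) = (-1)^{#(π)-1}(#(π)-1)!`. -/
noncomputable def cum {F ι : Type*} [Field F] [DecidableEq ι]
    (u : Finset ι → RatFunc F) (H : Finset ι) : RatFunc F :=
  ∑ᶠ π : Finpartition H,
    (((-1 : ℤ) ^ (π.parts.card - 1) * (π.parts.card - 1).factorial : ℤ)) •
      ∏ B ∈ π.parts, u B

/-! Möbius inversion on the Boolean lattice gives the strong factorization
`u_B = ∏_{h ∈ B} u_{h} · ∏_{W ⊆ B, |W| ≥ 2} (1 + T_W)`, so expanding the products,
`κ_H = ∏_{h ∈ H} u_{h} · ∑_S c(S) ∏_{W ∈ S} T_W`, where `S` runs over families of subsets of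
`H` with at least two elements and `c(S)` is the sum of `μ(π, {H})` over the partitions `π`
in which every member of `S` lies inside a block. The term of `S` is
`O(α^{∑_{W ∈ S} (|W| - 1)})`. When this exponent is below `|H| - 1`, the members of `S` do not
connect `H`, and `c(S) = 0`: if `t` is the component of a point, the partitions counted by
`c(S)` arise from those of `H \ t` with `k` blocks by adding `t` as a new block or merging it
into one of the `k` blocks, which contributes `μ(k + 1) + k μ(k) = 0`. -/

open Finset

section Regularity

variable {F : Type*} [Field F] {f g : RatFunc F} {a b k : ℕ}

theorem NoPoleAtZero.of_denom_dvd {p : Polynomial F} (h : f.denom ∣ p)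
    (hp : p.eval 0 ≠ 0) : NoPoleAtZero f := by
  obtain ⟨c, rfl⟩ := h
  exact left_ne_zero_of_mul (by rwa [← Polynomial.eval_mul])

theorem NoPoleAtZero.mul (hf : NoPoleAtZero f) (hg : NoPoleAtZero g) :
    NoPoleAtZero (f * g) :=
  .of_denom_dvd (RatFunc.denom_mul_dvd f g)
    (by rw [Polynomial.eval_mul]; exact mul_ne_zero hf hg)

theorem NoPoleAtZero.add (hf : NoPoleAtZero f) (hg : NoPoleAtZero g) :
    NoPoleAtZero (f + g) :=
  .of_denom_dvd (RatFunc.denom_add_dvd f g)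
    (by rw [Polynomial.eval_mul]; exact mul_ne_zero hf hg)

theorem noPoleAtZero_algebraMap (p : Polynomial F) :
    NoPoleAtZero (algebraMap (Polynomial F) (RatFunc F) p) := by
  simp [NoPoleAtZero, RatFunc.denom_algebraMap]

variable (F) in
def regularAtZero : Subring (RatFunc F) where
  carrier := {f | NoPoleAtZero f}
  mul_mem' := NoPoleAtZero.mul
  add_mem' := NoPoleAtZero.add
  one_mem' := by simpa using noPoleAtZero_algebraMap (F := F) 1
  zero_mem' := by simpa using noPoleAtZero_algebraMap (F := F) 0
  neg_mem' {f} hf := by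
    rw [← neg_one_mul]
    simpa using (noPoleAtZero_algebraMap (-1)).mul hf

theorem mem_regularAtZero : f ∈ regularAtZero F ↔ NoPoleAtZero f := Iff.rfl

theorem X_mem_regularAtZero : (RatFunc.X : RatFunc F) ∈ regularAtZero F :=
  mem_regularAtZero.2 (by simpa using noPoleAtZero_algebraMap (F := F) Polynomial.X)

namespace IsBigO

theorem zero (k : ℕ) : IsBigO k (0 : RatFunc F) :=
  ⟨0, (regularAtZero F).zero_mem, by simp⟩

theorem add (hf : IsBigO k f) (hg : IsBigO k g) : IsBigO k (f + g) := by
  obtain ⟨f', hf', rfl⟩ := hf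
  obtain ⟨g', hg', rfl⟩ := hg
  exact ⟨f' + g', (regularAtZero F).add_mem hf' hg', by ring⟩

theorem zsmul (n : ℤ) (hf : IsBigO k f) : IsBigO k (n • f) := by
  obtain ⟨f', hf', rfl⟩ := hf
  exact ⟨n • f', (regularAtZero F).zsmul_mem hf' n, by rw [mul_smul_comm]⟩

theorem mul (hf : IsBigO a f) (hg : IsBigO b g) : IsBigO (a + b) (f * g) := by
  obtain ⟨f', hf', rfl⟩ := hf
  obtain ⟨g', hg', rfl⟩ := hg
  exact ⟨f' * g', (regularAtZero F).mul_mem hf' hg', by ring⟩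

theorem of_le (hf : IsBigO a f) (h : b ≤ a) : IsBigO b f := by
  obtain ⟨f', hf', rfl⟩ := hf
  refine ⟨RatFunc.X ^ (a - b) * f',
    (regularAtZero F).mul_mem ((regularAtZero F).pow_mem X_mem_regularAtZero _) hf', ?_⟩
  rw [← mul_assoc, ← pow_add, Nat.add_sub_cancel' h]

theorem sum {γ : Type*} {s : Finset γ} {f : γ → RatFunc F} (h : ∀ i ∈ s, IsBigO k (f i)) :
    IsBigO k (∑ i ∈ s, f i) :=
  Finset.sum_induction f (IsBigO k) (fun _ _ => add) (zero k) h

theorem prod {γ : Type*} {s : Finset γ} {f : γ → RatFunc F} {k : γ → ℕ}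
    (h : ∀ i ∈ s, IsBigO (k i) (f i)) : IsBigO (∑ i ∈ s, k i) (∏ i ∈ s, f i) := by
  classical
  induction s using Finset.induction with
  | empty => exact ⟨1, (regularAtZero F).one_mem, by simp⟩
  | insert i s hi ih =>
    rw [prod_insert hi, sum_insert hi]
    exact (h i (mem_insert_self i s)).mul (ih fun j hj => h j (mem_insert_of_mem hj))

end IsBigO

end Regularity

section StrongFactorization

theorem prod_zpow_eq_zpow_sum₀ {G γ : Type*} [CommGroupWithZero G] {a : G} (ha : a ≠ 0)
    (s : Finset γ) (f : γ → ℤ) : ∏ i ∈ s, a ^ f i = a ^ ∑ i ∈ s, f i := by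
  classical
  induction s using Finset.induction with
  | empty => simp
  | insert i s hi ih => rw [prod_insert hi, sum_insert hi, ih, zpow_add₀ ha]

variable {F ι : Type*} [Field F] [DecidableEq ι]

theorem sum_Icc_neg_one_pow_card_sub {G B : Finset ι} (h : G ⊆ B) :
    ∑ W ∈ Icc G B, (-1 : ℤ) ^ (#W - #G) = if G = B then 1 else 0 := by
  have hdisj : ∀ V ∈ (B \ G).powerset, Disjoint G V := fun V hV =>
    disjoint_of_subset_right (mem_powerset.1 hV) disjoint_sdiff
  rw [Icc_eq_image_powerset h, sum_image fun V hV V' hV' hVV' => by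
    rw [← union_sdiff_cancel_left (hdisj V hV), hVV', union_sdiff_cancel_left (hdisj V' hV')]]
  rw [sum_congr rfl fun V hV => by
    rw [card_union_of_disjoint (hdisj V hV), Nat.add_sub_cancel_left],
    sum_powerset_neg_one_pow_card]
  simp only [sdiff_eq_empty_iff_subset]
  exact if_congr ⟨fun hBG => hBG.antisymm' h, fun hGB => hGB ▸ subset_rfl⟩ rfl rfl

variable (u : Finset ι → RatFunc F)

theorem prod_powerset_one_add_Terr (hne : ∀ I, u I ≠ 0) (B : Finset ι) :
    ∏ W ∈ B.powerset, (1 + Terr u W) = u B :=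
  calc ∏ W ∈ B.powerset, (1 + Terr u W)
      = ∏ W ∈ B.powerset, ∏ G ∈ W.powerset, u G ^ ((-1 : ℤ) ^ (#W - #G)) := by
        simp only [Terr, add_sub_cancel]
    _ = ∏ G ∈ B.powerset, ∏ W ∈ Icc G B, u G ^ ((-1 : ℤ) ^ (#W - #G)) :=
        prod_comm' fun W G => by
          simp only [mem_powerset, mem_Icc]
          exact ⟨fun h => ⟨⟨h.2, h.1⟩, h.2.trans h.1⟩, fun h => ⟨h.1.2, h.1.1⟩⟩
    _ = ∏ G ∈ B.powerset, if G = B then u G else 1 := by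
        refine prod_congr rfl fun G hG => ?_
        rw [prod_zpow_eq_zpow_sum₀ (hne G), sum_Icc_neg_one_pow_card_sub (mem_powerset.1 hG)]
        split_ifs <;> simp
    _ = u B := by rw [prod_ite_eq' B.powerset B u, if_pos (mem_powerset_self B)]

def nontrivialSubsets (s : Finset ι) : Finset (Finset ι) :=
  s.powerset.filter fun W => 2 ≤ #W

theorem eq_prod_singleton_mul_prod_one_add_Terr (h0 : u ∅ = 1) (hne : ∀ I, u I ≠ 0)
    (B : Finset ι) :
    u B = (∏ h ∈ B, u {h}) * ∏ W ∈ nontrivialSubsets B, (1 + Terr u W) := by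
  have hsmall : B.powerset.filter (fun W => ¬ 2 ≤ #W) = insert ∅ (B.image singleton) := by
    ext W
    simp only [mem_filter, mem_powerset, mem_insert, mem_image, not_le]
    constructor
    · rintro ⟨hWB, hW⟩
      obtain hW | hW : #W = 0 ∨ #W = 1 := by omega
      · exact .inl (card_eq_zero.1 hW)
      · obtain ⟨a, rfl⟩ := card_eq_one.1 hW
        exact .inr ⟨a, singleton_subset_iff.1 hWB, rfl⟩
    · rintro (rfl | ⟨a, ha, rfl⟩)
      · simp
      · simp [ha]
  have hTerr_empty : Terr u ∅ = 0 := by simp [Terr, h0]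
  have hTerr_singleton : ∀ h : ι, 1 + Terr u {h} = u {h} := fun h => by
    have hps : ({h} : Finset ι).powerset = {∅, {h}} := by ext; simp [subset_singleton_iff]
    simp [Terr, h0, hps]
  rw [← prod_powerset_one_add_Terr u hne B, nontrivialSubsets,
    ← prod_filter_mul_prod_filter_not B.powerset (fun W => 2 ≤ #W), mul_comm, hsmall,
    prod_insert (by simp), prod_image (fun x _ y _ h => singleton_injective h)]
  simp only [hTerr_empty, hTerr_singleton, add_zero, one_mul]

end StrongFactorization

section Expansion

variable {F ι : Type*} [Field F] [DecidableEq ι]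

def Compatible {s : Finset ι} (S : Finset (Finset ι)) (π : Finpartition s) : Prop :=
  ∀ W ∈ S, ∃ B ∈ π.parts, W ⊆ B

instance {s : Finset ι} (S : Finset (Finset ι)) : DecidablePred (Compatible (s := s) S) :=
  fun π => inferInstanceAs (Decidable (∀ W ∈ S, ∃ B ∈ π.parts, W ⊆ B))

/-- `μ(π, {H})` for a partition `π` with `k` blocks. -/
def partitionMobius (k : ℕ) : ℤ := (-1) ^ (k - 1) * (k - 1).factorial

theorem partitionMobius_succ_add_mul {k : ℕ} (hk : 1 ≤ k) :
    partitionMobius (k + 1) + k * partitionMobius k = 0 := by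
  obtain ⟨m, rfl⟩ := Nat.exists_eq_add_of_le' hk
  simp only [partitionMobius, Nat.add_sub_cancel, Nat.factorial_succ, pow_succ]
  push_cast
  ring

def cumulantWeight (s : Finset ι) (S : Finset (Finset ι)) : ℤ :=
  ∑ π : Finpartition s with Compatible S π, partitionMobius #π.parts

theorem mem_biUnion_nontrivialSubsets {s : Finset ι} (π : Finpartition s) {W : Finset ι} :
    W ∈ π.parts.biUnion nontrivialSubsets ↔
      W ∈ nontrivialSubsets s ∧ ∃ B ∈ π.parts, W ⊆ B := by
  simp only [nontrivialSubsets, mem_biUnion, mem_filter, mem_powerset]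
  exact ⟨fun ⟨B, hB, hWB, hW⟩ => ⟨⟨hWB.trans (π.le hB), hW⟩, B, hB, hWB⟩,
    fun ⟨⟨_, hW⟩, B, hB, hWB⟩ => ⟨B, hB, hWB, hW⟩⟩

variable (u : Finset ι → RatFunc F)

theorem prod_parts_eq_prod_singleton_mul_sum (h0 : u ∅ = 1) (hne : ∀ I, u I ≠ 0) {s : Finset ι}
    (π : Finpartition s) :
    ∏ B ∈ π.parts, u B = (∏ h ∈ s, u {h}) *
      ∑ S ∈ (nontrivialSubsets s).powerset with Compatible S π, ∏ W ∈ S, Terr u W := by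
  have hdisj : (π.parts : Set (Finset ι)).PairwiseDisjoint nontrivialSubsets := by
    intro B hB C hC hBC
    refine disjoint_left.2 fun W hWB hWC => ?_
    simp only [nontrivialSubsets, mem_filter, mem_powerset] at hWB hWC
    obtain ⟨x, hx⟩ := card_pos.1 (by omega : 0 < #W)
    exact disjoint_left.1 (π.disjoint hB hC hBC) (hWB.1 hx) (hWC.1 hx)
  have hpowerset : (π.parts.biUnion nontrivialSubsets).powerset =
      (nontrivialSubsets s).powerset.filter (Compatible · π) := by
    ext S
    simp only [mem_powerset, mem_filter, subset_iff, mem_biUnion_nontrivialSubsets, Compatible]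
    exact ⟨fun h => ⟨fun W hW => (h hW).1, fun W hW => (h hW).2⟩,
      fun h W hW => ⟨h.1 hW, h.2 W hW⟩⟩
  calc ∏ B ∈ π.parts, u B
      = ∏ B ∈ π.parts, ((∏ h ∈ B, u {h}) * ∏ W ∈ nontrivialSubsets B, (1 + Terr u W)) :=
        prod_congr rfl fun B _ => eq_prod_singleton_mul_prod_one_add_Terr u h0 hne B
    _ = (∏ h ∈ s, u {h}) * ∏ W ∈ π.parts.biUnion nontrivialSubsets, (1 + Terr u W) := by
        rw [prod_mul_distrib, prod_biUnion hdisj]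
        congr 1
        conv_rhs => rw [← π.biUnion_parts]
        exact (prod_biUnion π.disjoint).symm
    _ = _ := by rw [prod_one_add, hpowerset]

theorem cum_eq_mul_sum_cumulantWeight (h0 : u ∅ = 1) (hne : ∀ I, u I ≠ 0) (H : Finset ι) :
    cum u H = (∏ h ∈ H, u {h}) *
      ∑ S ∈ (nontrivialSubsets H).powerset, cumulantWeight H S • ∏ W ∈ S, Terr u W :=
  calc cum u H = ∑ π : Finpartition H, partitionMobius #π.parts • ∏ B ∈ π.parts, u B :=
        by rw [cum, finsum_eq_sum_of_fintype]; rfl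
    _ = (∏ h ∈ H, u {h}) * ∑ S ∈ (nontrivialSubsets H).powerset,
          ∑ π : Finpartition H with Compatible S π,
            partitionMobius #π.parts • ∏ W ∈ S, Terr u W := by
        simp only [prod_parts_eq_prod_singleton_mul_sum u h0 hne, ← mul_smul_comm, ← mul_sum,
          sum_filter, smul_sum, smul_ite, smul_zero]
        rw [sum_comm]
    _ = _ := by simp only [cumulantWeight, sum_smul]

end Expansion

section Saturation

variable {ι : Type*} [DecidableEq ι] {S : Finset (Finset ι)} {A C : Finset ι}

/-- `C` is a union of classes of the equivalence relation generated by the members of `S`. -/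
def IsSaturated (S : Finset (Finset ι)) (C : Finset ι) : Prop :=
  ∀ W ∈ S, (W ∩ C).Nonempty → W ⊆ C

instance (S : Finset (Finset ι)) : DecidablePred (IsSaturated S) :=
  fun C => inferInstanceAs (Decidable (∀ W ∈ S, (W ∩ C).Nonempty → W ⊆ C))

/-- The smallest `S`-saturated set containing `A`: saturated sets are closed under
intersection and `A ∪ ⋃ S` is saturated, so it is the intersection of the saturated subsets
of `A ∪ ⋃ S` containing `A`. -/
def saturation (S : Finset (Finset ι)) (A : Finset ι) : Finset ι :=
  (A ∪ S.sup id).filter fun x =>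
    ∀ C ∈ (A ∪ S.sup id).powerset, A ⊆ C → IsSaturated S C → x ∈ C

theorem subset_saturation (S : Finset (Finset ι)) (A : Finset ι) : A ⊆ saturation S A :=
  fun _ hx => mem_filter.2 ⟨mem_union_left _ hx, fun _ _ hAC _ => hAC hx⟩

theorem saturation_subset (hAC : A ⊆ C) (hC : IsSaturated S C) : saturation S A ⊆ C := by
  intro _ hx
  obtain ⟨-, hx⟩ := mem_filter.1 hx
  refine mem_of_mem_inter_left (hx (C ∩ (A ∪ S.sup id)) (mem_powerset.2 inter_subset_right)
    (subset_inter hAC subset_union_left) fun W hW hWC => ?_)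
  exact subset_inter (hC W hW (hWC.mono (inter_subset_inter_left inter_subset_left)))
    ((le_sup (f := id) hW).trans subset_union_right)

theorem isSaturated_saturation (S : Finset (Finset ι)) (A : Finset ι) :
    IsSaturated S (saturation S A) := by
  rintro W hW ⟨y, hy⟩ z hz
  obtain ⟨hyW, hy⟩ := mem_inter.1 hy
  refine mem_filter.2 ⟨subset_union_right ((le_sup (f := id) hW) hz), fun C hC hAC hCsat => ?_⟩
  exact hCsat W hW ⟨y, mem_inter.2 ⟨hyW, (mem_filter.1 hy).2 C hC hAC hCsat⟩⟩ hz

theorem card_union_le_of_inter_nonempty {W : Finset ι} (h : (W ∩ A).Nonempty) :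
    #(A ∪ W) ≤ #A + (#W - 1) := by
  have := card_union_add_card_inter A W
  have := card_pos.2 (inter_comm W A ▸ h)
  omega

/-- Saturating along one member `W` of `S` that meets `A` adds at most `#W - 1` points. -/
theorem card_saturation_le (S : Finset (Finset ι)) (A : Finset ι) :
    #(saturation S A) ≤ #A + ∑ W ∈ S, (#W - 1) := by
  induction S using Finset.strongInduction generalizing A with
  | H S ih =>
    by_cases hA : IsSaturated S A
    · exact (card_le_card (saturation_subset subset_rfl hA)).trans (Nat.le_add_right _ _)
    · simp only [IsSaturated, not_forall] at hA
      obtain ⟨W, hW, hWA, -⟩ := hA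
      have hsub : saturation S A ⊆ saturation (S.erase W) (A ∪ W) := by
        refine saturation_subset (subset_union_left.trans (subset_saturation _ _))
          fun W' hW' hW'A => ?_
        by_cases hWW' : W' = W
        · exact hWW' ▸ subset_union_right.trans (subset_saturation _ _)
        · exact isSaturated_saturation _ _ W' (mem_erase.2 ⟨hWW', hW'⟩) hW'A
      have := ih (S.erase W) (erase_ssubset hW) (A ∪ W)
      have := card_union_le_of_inter_nonempty hWA
      have := add_sum_erase S (fun W => #W - 1) hW
      have := card_le_card hsub
      omega

end Saturation

namespace Finpartition

variable {ι : Type*} [DecidableEq ι] {s t B : Finset ι}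

theorem disjoint_of_mem_insert_empty (P : Finpartition s) (hB : B ∈ insert ∅ P.parts)
    {C : Finset ι} (hC : C ∈ P.parts) (hCB : C ≠ B) : Disjoint C B := by
  rcases mem_insert.1 hB with rfl | hB
  · exact disjoint_empty_right C
  · exact P.disjoint hC hB hCB

theorem subset_of_mem_insert_empty (P : Finpartition s) (hB : B ∈ insert ∅ P.parts) : B ⊆ s :=
  (mem_insert.1 hB).elim (fun h => h ▸ empty_subset s) P.le

theorem parts_avoid_of_mem_insert_empty (P : Finpartition s) (hB : B ∈ insert ∅ P.parts) :
    (P.avoid B).parts = P.parts.erase B := by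
  ext C
  rw [mem_avoid, mem_erase]
  constructor
  · rintro ⟨D, hD, hDB, rfl⟩
    have hDB' : D ≠ B := fun h => hDB h.le
    rw [(P.disjoint_of_mem_insert_empty hB hD hDB').sdiff_eq_left]
    exact ⟨hDB', hD⟩
  · rintro ⟨hCB, hC⟩
    have hdisj := P.disjoint_of_mem_insert_empty hB hC hCB
    exact ⟨C, hC, fun hle => P.ne_bot hC (hdisj.eq_bot_of_le hle), hdisj.sdiff_eq_left⟩

variable (hts : t ⊆ s) (ht : t.Nonempty)

/-- Adjoin `t` to the part `B` of a partition of `s \ t`, or as a new part if `B = ∅`. -/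
def mergeInto (P : Finpartition (s \ t)) (hB : B ⊆ s \ t) : Finpartition s :=
  (P.avoid B).extend (b := B ∪ t) (ht.mono subset_union_right).ne_empty
    (disjoint_union_right.2 ⟨sdiff_disjoint, disjoint_sdiff_self_left.mono_left sdiff_subset⟩)
    (by
      ext x
      have := @hB x
      have := @hts x
      simp only [sup_eq_union, mem_union, mem_sdiff] at *
      tauto)

variable {hts ht} {P : Finpartition (s \ t)} {hB : B ⊆ s \ t}

theorem parts_mergeInto (hB' : B ∈ insert ∅ P.parts) :
    (mergeInto hts ht P hB).parts = insert (B ∪ t) (P.parts.erase B) := by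
  rw [mergeInto, extend_parts, parts_avoid_of_mem_insert_empty P hB']

theorem card_parts_mergeInto (hB' : B ∈ insert ∅ P.parts) :
    #(mergeInto hts ht P hB).parts = #(P.parts.erase B) + 1 := by
  rw [mergeInto, card_extend, parts_avoid_of_mem_insert_empty P hB']

theorem part_mergeInto {x : ι} (hx : x ∈ t) (hB' : B ∈ insert ∅ P.parts) :
    (mergeInto hts ht P hB).part x = B ∪ t :=
  part_eq_of_mem _ (by rw [parts_mergeInto hB']; exact mem_insert_self _ _)
    (mem_union_right _ hx)

theorem avoid_mergeInto (hB' : B ∈ insert ∅ P.parts) :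
    (mergeInto hts ht P hB).avoid t = P := by
  have hBt : Disjoint B t := disjoint_of_subset_left hB disjoint_sdiff_self_left
  have hPt : ∀ D ∈ P.parts, Disjoint D t := fun D hD =>
    disjoint_of_subset_left (P.le hD) disjoint_sdiff_self_left
  ext C
  rw [mem_avoid, parts_mergeInto hB']
  simp only [mem_insert, mem_erase, exists_eq_or_imp, union_sdiff_cancel_right hBt]
  constructor
  · rintro (⟨hBt', rfl⟩ | ⟨D, ⟨-, hD⟩, -, rfl⟩)
    · rcases mem_insert.1 hB' with rfl | hBP
      · exact absurd (by simp) hBt'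
      · exact hBP
    · rwa [(hPt D hD).sdiff_eq_left]
  · intro hC
    have hCt : ¬ C ≤ t := fun hle => P.ne_bot hC ((hPt C hC).eq_bot_of_le hle)
    by_cases hCB : C = B
    · exact .inl ⟨fun hle => hCt (hCB ▸ subset_union_left.trans hle), hCB.symm⟩
    · exact .inr ⟨C, ⟨hCB, hC⟩, hCt, (hPt C hC).sdiff_eq_left⟩

theorem part_sdiff_mem_insert_empty (π : Finpartition s) (x : ι) :
    π.part x \ t ∈ insert ∅ (π.avoid t).parts := by
  by_cases h : π.part x \ t = ∅
  · exact h ▸ mem_insert_self _ _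
  · have hx : x ∈ s := π.part_nonempty.1 ((nonempty_iff_ne_empty.2 h).mono sdiff_subset)
    exact mem_insert_of_mem ((mem_avoid _).2
      ⟨_, π.part_mem.2 hx, fun hle => h (sdiff_eq_empty_iff_subset.2 hle), rfl⟩)

theorem mergeInto_avoid (π : Finpartition s) {x : ι} (htx : t ⊆ π.part x)
    (hB : π.part x \ t ⊆ s \ t) : mergeInto hts ht (π.avoid t) hB = π := by
  have hpx : π.part x ∈ π.parts := π.part_mem.2 (π.part_nonempty.1 (ht.mono htx))
  have hdisj : ∀ C ∈ π.parts, C ≠ π.part x → Disjoint C (π.part x) := fun C hC hCx =>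
    π.disjoint hC hpx hCx
  ext C
  rw [parts_mergeInto (part_sdiff_mem_insert_empty π x), sdiff_union_of_subset htx, mem_insert,
    mem_erase, mem_avoid]
  constructor
  · rintro (rfl | ⟨hC, D, hD, -, rfl⟩)
    · exact hpx
    · by_cases hDx : D = π.part x
      · exact absurd (hDx ▸ rfl) hC
      · rwa [(disjoint_of_subset_right htx (hdisj D hD hDx)).sdiff_eq_left]
  · intro hC
    by_cases hCx : C = π.part x
    · exact .inl hCx
    · have hCdisj := hdisj C hC hCx
      have hCt := disjoint_of_subset_right htx hCdisj
      refine .inr ⟨fun h => π.ne_bot hC (hCdisj.eq_bot_of_le (h ▸ sdiff_subset)), C, hC,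
        fun hle => π.ne_bot hC (hCt.eq_bot_of_le hle), hCt.sdiff_eq_left⟩

end Finpartition

section Vanishing

variable {ι : Type*} [DecidableEq ι] {s t : Finset ι} {S : Finset (Finset ι)}

theorem Compatible.avoid {π : Finpartition s} (hπ : Compatible S π)
    (hS : ∀ W ∈ S, W.Nonempty) :
    Compatible (S.filter (Disjoint · t)) (π.avoid t) := by
  intro W hW
  obtain ⟨hWS, hWt⟩ := mem_filter.1 hW
  obtain ⟨B, hB, hWB⟩ := hπ W hWS
  obtain ⟨y, hy⟩ := hS W hWS
  exact ⟨B \ t, (Finpartition.mem_avoid _).2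
    ⟨B, hB, fun hBt => disjoint_left.1 hWt hy (hBt (hWB hy)), rfl⟩, subset_sdiff.2 ⟨hWB, hWt⟩⟩

theorem Compatible.mergeInto {hts : t ⊆ s} {ht : t.Nonempty} {P : Finpartition (s \ t)}
    {B : Finset ι} {hB : B ⊆ s \ t} (hP : Compatible (S.filter (Disjoint · t)) P)
    (hsep : ∀ W ∈ S, W ⊆ t ∨ Disjoint W t) (hB' : B ∈ insert ∅ P.parts) :
    Compatible S (P.mergeInto hts ht hB) := by
  intro W hW
  rw [Finpartition.parts_mergeInto hB']
  rcases hsep W hW with hWt | hWt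
  · exact ⟨B ∪ t, mem_insert_self _ _, hWt.trans subset_union_right⟩
  · obtain ⟨C, hC, hWC⟩ := hP W (mem_filter.2 ⟨hW, hWt⟩)
    by_cases hCB : C = B
    · exact ⟨B ∪ t, mem_insert_self _ _, hCB ▸ hWC.trans subset_union_left⟩
    · exact ⟨C, mem_insert_of_mem (mem_erase.2 ⟨hCB, hC⟩), hWC⟩

theorem Compatible.isSaturated_part {π : Finpartition s} (hπ : Compatible S π) (x : ι) :
    IsSaturated S (π.part x) := by
  rintro W hW ⟨y, hy⟩
  obtain ⟨hyW, hyx⟩ := mem_inter.1 hy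
  obtain ⟨B, hB, hWB⟩ := hπ W hW
  have hx : x ∈ s := π.part_nonempty.1 ⟨y, hyx⟩
  exact π.eq_of_mem_parts hB (π.part_mem.2 hx) (hWB hyW) hyx ▸ hWB

theorem sum_partitionMobius_eq_sum_sigma {x : ι} (hS : ∀ W ∈ S, W.Nonempty) (hts : t ⊆ s)
    (hx : x ∈ t) (hsep : ∀ W ∈ S, W ⊆ t ∨ Disjoint W t)
    (hpart : ∀ π : Finpartition s, Compatible S π → t ⊆ π.part x) :
    ∑ π : Finpartition s with Compatible S π, partitionMobius #π.parts =
      ∑ p ∈ (univ.filter (Compatible (s := s \ t) (S.filter (Disjoint · t)))).sigma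
          (insert ∅ ·.parts),
        partitionMobius (#(p.1.parts.erase p.2) + 1) := by
  have ht : t.Nonempty := ⟨x, hx⟩
  have hpx (π : Finpartition s) := π.part_sdiff_mem_insert_empty (t := t) x
  refine sum_bij' (fun π _ => ⟨π.avoid t, π.part x \ t⟩)
    (fun p hp => p.1.mergeInto hts ht (p.1.subset_of_mem_insert_empty (mem_sigma.1 hp).2))
    (fun π hπ => ?_) (fun p hp => ?_) (fun π hπ => ?_) (fun p hp => ?_) fun π hπ => ?_
  · exact mem_sigma.2 ⟨mem_filter.2 ⟨mem_univ _, (mem_filter.1 hπ).2.avoid hS⟩, hpx π⟩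
  · obtain ⟨hP, hB⟩ := mem_sigma.1 hp
    exact mem_filter.2 ⟨mem_univ _, (mem_filter.1 hP).2.mergeInto hsep hB⟩
  · exact π.mergeInto_avoid (hpart π (mem_filter.1 hπ).2) _
  · have hB := (mem_sigma.1 hp).2
    refine Sigma.ext (Finpartition.avoid_mergeInto hB) (heq_of_eq ?_)
    rw [Finpartition.part_mergeInto hx hB, union_sdiff_cancel_right
      (disjoint_of_subset_left (p.1.subset_of_mem_insert_empty hB) disjoint_sdiff_self_left)]
  · conv_lhs => rw [← π.mergeInto_avoid (hts := hts) (ht := ht) (hpart π (mem_filter.1 hπ).2)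
      ((π.avoid t).subset_of_mem_insert_empty (hpx π))]
    rw [Finpartition.card_parts_mergeInto (hpx π)]

theorem sum_partitionMobius_eq_zero {x : ι} (hS : ∀ W ∈ S, W.Nonempty) (hts : t ⊂ s)
    (hx : x ∈ t) (hsep : ∀ W ∈ S, W ⊆ t ∨ Disjoint W t)
    (hpart : ∀ π : Finpartition s, Compatible S π → t ⊆ π.part x) :
    ∑ π : Finpartition s with Compatible S π, partitionMobius #π.parts = 0 := by
  rw [sum_partitionMobius_eq_sum_sigma hS hts.subset hx hsep hpart, sum_sigma]
  refine sum_eq_zero fun P _ => ?_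
  have hk : 1 ≤ #P.parts :=
    card_pos.2 (P.parts_nonempty (nonempty_iff_ne_empty.1 (sdiff_nonempty.2 hts.2)))
  rw [sum_insert P.empty_notMem_parts, erase_eq_of_notMem P.empty_notMem_parts,
    sum_congr rfl fun B hB => by
      rw [card_erase_of_mem hB, Nat.sub_add_cancel (card_pos.2 ⟨B, hB⟩)],
    sum_const, nsmul_eq_mul]
  exact partitionMobius_succ_add_mul hk

end Vanishing

theorem cumulantWeight_eq_zero {ι : Type*} [DecidableEq ι] {s : Finset ι}
    {S : Finset (Finset ι)} (hS : S ⊆ nontrivialSubsets s)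
    (hcard : ∑ W ∈ S, (#W - 1) + 1 < #s) : cumulantWeight s S = 0 := by
  have hWs : ∀ W ∈ S, W ⊆ s ∧ 2 ≤ #W := fun W hW => by
    simpa [nontrivialSubsets] using hS hW
  obtain ⟨x, hx⟩ := card_pos.1 (by omega : 0 < #s)
  refine sum_partitionMobius_eq_zero (t := saturation S {x})
    (fun W hW => card_pos.1 (by have := (hWs W hW).2; omega)) ?_
    (subset_saturation _ _ (mem_singleton_self x)) (fun W hW => ?_) fun π hπ => ?_
  · have hts : saturation S {x} ⊆ s :=
      saturation_subset (singleton_subset_iff.2 hx) fun W hW _ => (hWs W hW).1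
    refine hts.ssubset_of_ne fun h => ?_
    have := card_saturation_le S {x}
    rw [h, card_singleton] at this
    omega
  · by_cases h : (W ∩ saturation S {x}).Nonempty
    · exact .inl (isSaturated_saturation S {x} W hW h)
    · exact .inr (disjoint_iff_inter_eq_empty.2 (not_nonempty_iff_eq_empty.1 h))
  · exact saturation_subset (singleton_subset_iff.2 (π.mem_part hx)) (hπ.isSaturated_part x)

theorem stmt_9_general {F : Type*} [Field F] (r : ℕ) (u : Finset (Fin r) → RatFunc F)
    (h0 : u ∅ = 1) (hne : ∀ I, u I ≠ 0)
    (hT : ∀ H : Finset (Fin r), 2 ≤ H.card → IsBigO (H.card - 1) (Terr u H)) :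
    ∀ H : Finset (Fin r), 2 ≤ H.card →
      ∃ g : RatFunc F, NoPoleAtZero g ∧
        cum u H = (∏ h ∈ H, u {h}) * (RatFunc.X ^ (H.card - 1) * g) := by
  intro H _
  suffices IsBigO (#H - 1)
      (∑ S ∈ (nontrivialSubsets H).powerset, cumulantWeight H S • ∏ W ∈ S, Terr u W) by
    obtain ⟨g, hg, hsum⟩ := this
    exact ⟨g, hg, by rw [cum_eq_mul_sum_cumulantWeight u h0 hne, hsum]⟩
  refine IsBigO.sum fun S hS => ?_
  by_cases hdeg : #H - 1 ≤ ∑ W ∈ S, (#W - 1)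
  · refine ((IsBigO.prod fun W hW => hT W ?_).of_le hdeg).zsmul _
    exact (mem_filter.1 (mem_powerset.1 hS hW)).2
  · rw [cumulantWeight_eq_zero (mem_powerset.1 hS) (by omega), zero_smul]
    exact IsBigO.zero _

/-- Strong factorization implies the small cumulant property:
`κ_H(u) = (∏_{h∈H} u_{{h}}) · O(α^{|H|-1})`. -/
theorem stmt_9 {F : Type*} [Field F] (r : ℕ) (u : Finset (Fin r) → RatFunc F)
    (h0 : u ∅ = 1) (hne : ∀ I, u I ≠ 0)
    (hreg : ∀ I, NoPoleAtZero (u I)) (hreginv : ∀ I, NoPoleAtZero (u I)⁻¹)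
    (hT : ∀ H : Finset (Fin r), 2 ≤ H.card → IsBigO (H.card - 1) (Terr u H)) :
    ∀ H : Finset (Fin r), 2 ≤ H.card →
      ∃ g : RatFunc F, NoPoleAtZero g ∧
        cum u H = (∏ h ∈ H, u {h}) * (RatFunc.X ^ (H.card - 1) * g) :=
  stmt_9_general r u h0 hne hT
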